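/- Let 1 ≤ i ≤ n and let v = (v_{cd})_{1 ≤ c < d ≤ n+1} be a vector with all entries in {0,1} such that for no d with i+1 < d ≤ n+1 are both v_{id} = 1 and v_{i+1,d} = 1. Set v_{i+1,i+1} := 1 − v_{i,i+1}, and for 0 ≤ p ≤ n−i encode the pair x_p = (v_{i,i+p+1}, v_{i+1,i+p+1}) — which is (0,0), (0,1) or (1,0) — as the symbol 0, −, + respectively, obtaining a sequence of symbols indexed by p = 0, 1, …, n−i. Reduce this sequence by deleting all non-initial 0's, and then repeatedly deleting adjacent non-initial pairs of symbols of the form +,− until none remain. In the reduced sequence, distinguish the following symbol: if any − occurs after the initial symbol (where, if the reduced sequence begins with the pair +,−, that pair counts as the initial symbol), distinguish the last − of the sequence; otherwise distinguish the initial symbol itself (the + of the initial pair, if the sequence begins +,−). Let p be the index with x_p corresponding to the distinguished symbol. Then the minimal j maximizing f_{ij} over i < j ≤ n+1 is j_0 = i + p + 1. Consequently: if the distinguished symbol is −, then F̃_i changes v_{i,i+p+1} from 0 to 1 and changes v_{i+1,i+p+1} from 1 to 0 (the latter change having no effect when p = 0); and if the distinguished symbol is + or 0, then p = 0 and F̃_i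 increases v_{i,i+1} by 1. -/

import Mathlib

/-!
Common definitions: type `A_n` combinatorics of reduced words for the longest
element, partial quivers, chamber sets, Lusztig cones, the rectangle diagrams
`D(P)` and `D(j)`, the sets `S(P)`, `S(j)`, `S(x)`, and Reineke's description
of Kashiwara's operators.
-/

noncomputable section

namespace Paper

attribute [local instance] Classical.propDecidable

/-! ### Partial quivers of type `A_n` -/

/-- Edge symbols of a partial quiver: leftward arrow, rightward arrow, undirected. -/
inductive PQSym : Type
  | L : PQSym
  | R : PQSym
  | N : PQSym
deriving DecidableEq

/-- A partial quiver of type `A_n`: symbols on the edges `2, …, n` (numbered from the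
right-hand end), with the directed edges forming a nonempty interval. -/
structure PartialQuiver (n : ℕ) : Type where
  edge : ℕ → PQSym
  undirected_outside : ∀ j : ℕ, j < 2 ∨ n < j → edge j = PQSym.N
  directed_nonempty : ∃ j : ℕ, edge j ≠ PQSym.N
  directed_interval : ∀ j j' j'' : ℕ, j ≤ j' → j' ≤ j'' →
    edge j ≠ PQSym.N → edge j'' ≠ PQSym.N → edge j' ≠ PQSym.N

/-- A quiver: a partial quiver with no undirected edge. -/
def IsQuiver (n : ℕ) (Q : PartialQuiver n) : Prop :=
  ∀ j : ℕ, 2 ≤ j → j ≤ n → Q.edge j ≠ PQSym.N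

/-- `P ≤ Q` : every directed edge of `P` carries the same symbol in `Q`. -/
def PQle (n : ℕ) (P Q : PartialQuiver n) : Prop :=
  ∀ j : ℕ, P.edge j ≠ PQSym.N → Q.edge j = P.edge j

/-- The edges `lo, lo+1, …, hi` form a component of `P` (a maximal run of equally
oriented directed edges).  Its type is `P.edge lo`, and `a(Y) = lo - 1`,
`b(Y) = hi + 1`. -/
def IsComp (n : ℕ) (P : PartialQuiver n) (lo hi : ℕ) : Prop :=
  2 ≤ lo ∧ lo ≤ hi ∧ hi ≤ n ∧ P.edge lo ≠ PQSym.N ∧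
    (∀ j : ℕ, lo ≤ j → j ≤ hi → P.edge j = P.edge lo) ∧
    P.edge (lo - 1) ≠ P.edge lo ∧ P.edge (hi + 1) ≠ P.edge lo

/-- The chamber set `l(P) ⊆ [1, n+1]` of a partial quiver:
`l₁(P) = {j : edge j is an L}`, `l₂(P) = [1, p-1]` if the rightmost directed edge is
an `R` at position `p`, `l₃(P) = [q+1, n+1]` if the leftmost directed edge is an `R`
at position `q`. -/
def lset (n : ℕ) (P : PartialQuiver n) : Finset ℕ :=
  (Finset.Icc 1 (n + 1)).filter (fun m =>
    P.edge m = PQSym.L ∨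
    (∃ p ∈ Finset.Icc 2 n, P.edge p = PQSym.R ∧
      (∀ q ∈ Finset.Icc 2 n, q < p → P.edge q = PQSym.N) ∧ m < p) ∨
    (∃ q ∈ Finset.Icc 2 n, P.edge q = PQSym.R ∧
      (∀ p' ∈ Finset.Icc 2 n, q < p' → P.edge p' = PQSym.N) ∧ q < m))

/-! ### Reduced words for the longest element, positive roots, chamber sets -/

/-- The Coxeter generator `s_i`, acting as the transposition `(i, i+1)` of `ℕ`. -/
def sRefl (i : ℕ) : Equiv.Perm ℕ := Equiv.swap i (i + 1)

/-- The product `s_{i_1} s_{i_2} ⋯ s_{i_k}` of a word. -/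
def wordProd (w : List ℕ) : Equiv.Perm ℕ := (w.map sRefl).prod

/-- `w` is a reduced expression for the longest element `w₀` of `W(A_n) = S_{n+1}`:
its letters lie in `[1,n]`, it has length `n(n+1)/2`, and its product is the
permutation `m ↦ n + 2 - m` of `[1, n+1]`. -/
def IsRedWordW0 (n : ℕ) (w : List ℕ) : Prop :=
  (∀ i ∈ w, 1 ≤ i ∧ i ≤ n) ∧ w.length = n * (n + 1) / 2 ∧
    ∀ m : ℕ, 1 ≤ m → m ≤ n + 1 → wordProd w m = n + 2 - m

/-- The letter `i_r` of `w` (positions numbered from `1`). -/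
def letterAt (w : List ℕ) (r : ℕ) : ℕ := w.getD (r - 1) 0

/-- The `r`-th positive root `α^r = s_{i_1} ⋯ s_{i_{r-1}} (α_{i_r})` determined by `w`,
recorded as the pair `(c, d)` with `c < d` for `α_{cd} = α_c + ⋯ + α_{d-1}`. -/
def rootAt (w : List ℕ) (r : ℕ) : ℕ × ℕ :=
  (min (wordProd (w.take (r - 1)) (letterAt w r))
       (wordProd (w.take (r - 1)) (letterAt w r + 1)),
   max (wordProd (w.take (r - 1)) (letterAt w r))
       (wordProd (w.take (r - 1)) (letterAt w r + 1)))

/-- The chamber sets of the chamber diagram `CD(w)`: bounded chambers correspond to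
minimal pairs `r < r'` (equal letters with no equal letter in between); the chamber
set of such a chamber is the set of strings passing below it, namely
`{(s_{i_1} ⋯ s_{i_r})(m) : i_r < m ≤ n+1}`. -/
def chamberSets (n : ℕ) (w : List ℕ) : Set (Finset ℕ) :=
  { S | ∃ r r' : ℕ, 1 ≤ r ∧ r < r' ∧ r' ≤ w.length ∧ letterAt w r' = letterAt w r ∧
      (∀ p : ℕ, r < p → p < r' → letterAt w p ≠ letterAt w r) ∧
      S = (Finset.Icc (letterAt w r + 1) (n + 1)).image (wordProd (w.take r)) }

/-! ### The multisets `M(P)`, `M(j)` and the spanning vectors `v_P`, `v_j` -/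

/-- The number `m_{cd}` of components `Y` of `P` with `α_{cd} ∈ M(Y)`, where
`M(Y) = {α_{cd} : 1 ≤ c ≤ a(Y) ≤ b(Y) ≤ d ≤ n+1}`. -/
def compCount (n : ℕ) (P : PartialQuiver n) (c d : ℕ) : ℕ :=
  ((Finset.Icc 2 n ×ˢ Finset.Icc 2 n).filter (fun lh =>
    IsComp n P lh.1 lh.2 ∧ 1 ≤ c ∧ c ≤ lh.1 - 1 ∧ lh.2 + 1 ≤ d ∧ d ≤ n + 1)).card

/-- The multiplicity `⌈m_{cd}/2⌉` of `α_{cd}` in the multiset `M(P)`. -/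
def multMP (n : ℕ) (P : PartialQuiver n) (c d : ℕ) : ℕ := (compCount n P c d + 1) / 2

/-- The spanning vector `v_P(w)`: its `r`-th entry is the multiplicity of `α^r` in `M(P)`. -/
def vP (n : ℕ) (w : List ℕ) (P : PartialQuiver n) (r : ℕ) : ℕ :=
  if 1 ≤ r ∧ r ≤ w.length then multMP n P (rootAt w r).1 (rootAt w r).2 else 0

/-- The spanning vector `v_j(w)`: its `r`-th entry is the multiplicity of `α^r` in
`M(j) = {α_{cd} : c ≤ j < j+1 ≤ d}`. -/
def vj (n : ℕ) (w : List ℕ) (j r : ℕ) : ℕ :=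
  if 1 ≤ r ∧ r ≤ w.length ∧ (rootAt w r).1 ≤ j ∧ j + 1 ≤ (rootAt w r).2 then 1 else 0

/-- The Lusztig cone `C_w ⊆ ℕ^k` (entries indexed by positions `1, …, k`). -/
def LusztigCone (n : ℕ) (w : List ℕ) : Set (ℕ → ℕ) :=
  { a | (∀ r : ℕ, r = 0 ∨ w.length < r → a r = 0) ∧
      ∀ s s' : ℕ, 1 ≤ s → s < s' → s' ≤ w.length → letterAt w s' = letterAt w s →
        (∀ p : ℕ, s < p → p < s' → letterAt w p ≠ letterAt w s) →
        a s + a s' ≤ ∑ p ∈ (Finset.Ioo s s').filter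
          (fun p => letterAt w p = letterAt w s + 1 ∨ letterAt w s = letterAt w p + 1), a p }

/-- A single commutation move: interchange adjacent letters `p, q` with `|p - q| > 1`. -/
def CommMove (w w' : List ℕ) : Prop :=
  ∃ (u v : List ℕ) (p q : ℕ), (p + 1 < q ∨ q + 1 < p) ∧
    w = u ++ p :: q :: v ∧ w' = u ++ q :: p :: v

/-! ### Compatibility of a reduced word with a quiver -/

def flipSym : PQSym → PQSym
  | PQSym.L => PQSym.R
  | PQSym.R => PQSym.L
  | PQSym.N => PQSym.N

/-- Reverse all arrows incident to the vertex `v` (these are the edges `v` and `v+1`). -/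
def reverseAt (Q : ℕ → PQSym) (v : ℕ) : ℕ → PQSym :=
  fun j => if j = v ∨ j = v + 1 then flipSym (Q j) else Q j

/-- The vertex `v ∈ [1,n]` is a sink (all incident arrows point into `v`). -/
def IsSinkF (n : ℕ) (Q : ℕ → PQSym) (v : ℕ) : Prop :=
  1 ≤ v ∧ v ≤ n ∧ (2 ≤ v → Q v = PQSym.L) ∧ (v + 1 ≤ n → Q (v + 1) = PQSym.R)

def CompatibleAux (n : ℕ) : List ℕ → (ℕ → PQSym) → Prop
  | [], _ => True
  | i :: rest, Q => IsSinkF n Q i ∧ CompatibleAux n rest (reverseAt Q i)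

/-- `w` is compatible with the quiver `Q`: `i_1` is a sink of `Q` and the rest of `w`
is compatible with the quiver obtained by reversing all arrows incident to `i_1`. -/
def Compatible (n : ℕ) (w : List ℕ) (Q : PartialQuiver n) : Prop :=
  CompatibleAux n w Q.edge

/-! ### The piecewise-linear maps `T₂`, `T₃` -/

def T2 (x : ℕ × ℕ) : ℕ × ℕ := (x.2, x.1)

def T3 (x : ℤ × ℤ × ℤ) : ℤ × ℤ × ℤ :=
  (max x.2.2 (x.2.1 - x.1), x.1 + x.2.2, min x.1 (x.2.1 - x.2.2))

/-! ### The diagram `D(P)` -/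

/-- The point `T + u·(-1,-1) + v·(1,-1)` of a rectangle with top corner `T`. -/
def rectPt (T : ℤ × ℤ) (u v : ℕ) : ℤ × ℤ :=
  (T.1 - (u : ℤ) + (v : ℤ), T.2 - (u : ℤ) - (v : ℤ))

/-- `Tc` assigns to each component `(lo,hi)` of `P` the top corner of its rectangle
`ρ(Y)` (which has `a = lo - 1` rows in direction `(-1,-1)` and `n + 2 - b = n + 1 - hi`
columns in direction `(1,-1)`), so that whenever a component of type `L` is immediately
followed (on the right, i.e. at lower edge numbers) by one of type `R` their leftmost
corners coincide, and whenever one of type `R` is immediately followed by one of type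
`L` their rightmost corners coincide. -/
def IsRealization (n : ℕ) (P : PartialQuiver n) (Tc : ℕ × ℕ → ℤ × ℤ) : Prop :=
  ∀ lo hi lo' hi' : ℕ, IsComp n P lo hi → IsComp n P lo' hi' → hi' + 1 = lo →
    (P.edge lo = PQSym.L →
      rectPt (Tc (lo, hi)) (lo - 2) 0 = rectPt (Tc (lo', hi')) (lo' - 2) 0) ∧
    (P.edge lo = PQSym.R →
      rectPt (Tc (lo, hi)) 0 (n - hi) = rectPt (Tc (lo', hi')) 0 (n - hi'))

/-- `x` belongs to the rectangle of the component `(lo,hi)`. -/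
def InRect (n : ℕ) (Tc : ℕ × ℕ → ℤ × ℤ) (lo hi : ℕ) (x : ℤ × ℤ) : Prop :=
  ∃ u v : ℕ, u ≤ lo - 2 ∧ v ≤ n - hi ∧ x = rectPt (Tc (lo, hi)) u v

/-- The set of points of the diagram `D(P)`. -/
def pointsD (n : ℕ) (P : PartialQuiver n) (Tc : ℕ × ℕ → ℤ × ℤ) : Finset (ℤ × ℤ) :=
  ((Finset.Icc 2 n ×ˢ Finset.Icc 2 n).filter (fun lh => IsComp n P lh.1 lh.2)).biUnion
    (fun lh => (Finset.range (lh.1 - 1) ×ˢ Finset.range (n + 1 - lh.2)).image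
      (fun uv => rectPt (Tc lh) uv.1 uv.2))

/-- The label of the top corner of the rectangle of `(lo,hi)`: `1` for type `L`,
`b - a = hi - lo + 2` for type `R`. -/
def baseOf (n : ℕ) (P : PartialQuiver n) (lo hi : ℕ) : ℕ :=
  if P.edge lo = PQSym.L then 1 else hi - lo + 2

/-- The point `x` of `D(P)` carries the label `m`. -/
def HasLabel (n : ℕ) (P : PartialQuiver n) (Tc : ℕ × ℕ → ℤ × ℤ) (x : ℤ × ℤ) (m : ℕ) : Prop :=
  ∃ lo hi u v : ℕ, IsComp n P lo hi ∧ u ≤ lo - 2 ∧ v ≤ n - hi ∧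
    x = rectPt (Tc (lo, hi)) u v ∧ m = baseOf n P lo hi + u + v

/-- The label of a point of `D(P)` (labels from different rectangles agree). -/
def labelD (n : ℕ) (P : PartialQuiver n) (Tc : ℕ × ℕ → ℤ × ℤ) (x : ℤ × ℤ) : ℕ :=
  sInf { m | HasLabel n P Tc x m }

/-- The multiplicity `⌈t/2⌉` of a point, `t` being the number of rectangles containing it. -/
def multD (n : ℕ) (P : PartialQuiver n) (Tc : ℕ × ℕ → ℤ × ℤ) (x : ℤ × ℤ) : ℕ :=
  (((Finset.Icc 2 n ×ˢ Finset.Icc 2 n).filter (fun lh =>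
      IsComp n P lh.1 lh.2 ∧ InRect n Tc lh.1 lh.2 x)).card + 1) / 2

/-- Diagonal rows of `D(P)` run in direction `(1,-1)`; they are the level sets of the key. -/
def keyOf (x : ℤ × ℤ) : ℤ := x.1 + x.2

def maxKey (n : ℕ) (P : PartialQuiver n) (Tc : ℕ × ℕ → ℤ × ℤ) : ℤ :=
  ((pointsD n P Tc).image keyOf).max.unbotD 0

def minKey (n : ℕ) (P : PartialQuiver n) (Tc : ℕ × ℕ → ℤ × ℤ) : ℤ :=
  ((pointsD n P Tc).image keyOf).min.untopD 0

def maxX (n : ℕ) (P : PartialQuiver n) (Tc : ℕ × ℕ → ℤ × ℤ) : ℤ :=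
  ((pointsD n P Tc).image Prod.fst).max.unbotD 0

def minX (n : ℕ) (P : PartialQuiver n) (Tc : ℕ × ℕ → ℤ × ℤ) : ℤ :=
  ((pointsD n P Tc).image Prod.fst).min.untopD 0

def keyT (Tc : ℕ × ℕ → ℤ × ℤ) (lo hi : ℕ) : ℤ := keyOf (Tc (lo, hi))

def dT (Tc : ℕ × ℕ → ℤ × ℤ) (lo hi : ℕ) : ℤ := (Tc (lo, hi)).1 - (Tc (lo, hi)).2

/-- `c` is the key of a diagonal row of `D(P)`. -/
def IsCellRow (n : ℕ) (P : PartialQuiver n) (Tc : ℕ × ℕ → ℤ × ℤ) (c : ℤ) : Prop :=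
  ∃ x ∈ pointsD n P Tc, keyOf x = c

/-- The rectangle of the component `(lo,hi)` meets the diagonal row with key `c`. -/
def CoversRow (n : ℕ) (P : PartialQuiver n) (Tc : ℕ × ℕ → ℤ × ℤ) (lo hi : ℕ) (c : ℤ) : Prop :=
  IsComp n P lo hi ∧ keyT Tc lo hi - 2 * ((lo : ℤ) - 2) ≤ c ∧ c ≤ keyT Tc lo hi

/-- The lines in direction `(-1,-1)` bounding the rectangles which meet the diagonal
row with key `c` (recorded by their invariant `x - y`, offset by `±1` from the points). -/
def dEdges (n : ℕ) (P : PartialQuiver n) (Tc : ℕ × ℕ → ℤ × ℤ) (c : ℤ) : Finset ℤ :=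
  ((Finset.Icc 2 n ×ˢ Finset.Icc 2 n).filter (fun lh => CoversRow n P Tc lh.1 lh.2 c)).biUnion
    (fun lh => {dT Tc lh.1 lh.2 - 1, dT Tc lh.1 lh.2 + 2 * ((n : ℤ) - (lh.2 : ℤ)) + 1})

/-- The number of boxes in the row of boxes through the diagonal row with key `c`. -/
def boxCount (n : ℕ) (P : PartialQuiver n) (Tc : ℕ × ℕ → ℤ × ℤ) (c : ℤ) : ℕ :=
  (dEdges n P Tc c).card - 1

/-- `z` is (the key of) the central line `Z` of `D(P)`: it separates the diagonal rows
whose rows of boxes have box-numbers of one parity from those of the other parity. -/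
def IsCentralLine (n : ℕ) (P : PartialQuiver n) (Tc : ℕ × ℕ → ℤ × ℤ) (z : ℤ) : Prop :=
  minKey n P Tc < z ∧ z < maxKey n P Tc ∧
  (∀ c : ℤ, IsCellRow n P Tc c → c ≠ z) ∧
  (∀ c c' : ℤ, IsCellRow n P Tc c → IsCellRow n P Tc c' → z < c → z < c' →
    (Even (boxCount n P Tc c) ↔ Even (boxCount n P Tc c'))) ∧
  (∀ c c' : ℤ, IsCellRow n P Tc c → IsCellRow n P Tc c' → c < z → c' < z →
    (Even (boxCount n P Tc c) ↔ Even (boxCount n P Tc c'))) ∧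
  (∀ c c' : ℤ, IsCellRow n P Tc c → IsCellRow n P Tc c' → c < z → z < c' →
    ¬ (Even (boxCount n P Tc c) ↔ Even (boxCount n P Tc c')))

/-- `x` lies in `ρ*(Y)`: the part of the rectangle of `Y = (lo,hi)` on the same side
of the central line as its labelled corner (the rightmost corner for type `L`, the
leftmost corner for type `R`). -/
def InRhoStar (n : ℕ) (P : PartialQuiver n) (Tc : ℕ × ℕ → ℤ × ℤ) (z : ℤ)
    (lo hi : ℕ) (x : ℤ × ℤ) : Prop :=
  InRect n Tc lo hi x ∧
    (P.edge lo = PQSym.L → (z < keyOf x ↔ z < keyT Tc lo hi)) ∧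
    (P.edge lo = PQSym.R → (z < keyOf x ↔ z < keyT Tc lo hi - 2 * ((lo : ℤ) - 2)))

/-- The root `α_{cd}` arises from the component `Y = (lo,hi)` and the diagonal row with
key `k`: the intersection of that row with `ρ*(Y)` consists exactly of points labelled
`c, c+1, …, d-1` in order from top-left to bottom-right. -/
def ArisesFromY (n : ℕ) (P : PartialQuiver n) (Tc : ℕ × ℕ → ℤ × ℤ) (z : ℤ)
    (lo hi c d : ℕ) (k : ℤ) : Prop :=
  c < d ∧ ∃ p : ℤ × ℤ,
    ({ x : ℤ × ℤ | keyOf x = k ∧ InRhoStar n P Tc z lo hi x } =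
      { y : ℤ × ℤ | ∃ t : ℕ, t ≤ d - c - 1 ∧ y = (p.1 + (t : ℤ), p.2 - (t : ℤ)) }) ∧
    ∀ t : ℕ, t ≤ d - c - 1 → HasLabel n P Tc (p.1 + (t : ℤ), p.2 - (t : ℤ)) (c + t)

/-- The root `α_{cd}` arises from the diagonal row with key `k` (via some component). -/
def ArisesFrom (n : ℕ) (P : PartialQuiver n) (Tc : ℕ × ℕ → ℤ × ℤ) (z : ℤ)
    (c d : ℕ) (k : ℤ) : Prop :=
  ∃ lo hi : ℕ, IsComp n P lo hi ∧ ArisesFromY n P Tc z lo hi c d k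

/-- The set `S(Y)` of positive roots of a component. -/
def SY (n : ℕ) (P : PartialQuiver n) (Tc : ℕ × ℕ → ℤ × ℤ) (z : ℤ) (lo hi : ℕ) :
    Set (ℕ × ℕ) :=
  { cd | ∃ k : ℤ, ArisesFromY n P Tc z lo hi cd.1 cd.2 k }

/-- The set `S(P)` of positive roots. -/
def SP (n : ℕ) (P : PartialQuiver n) (Tc : ℕ × ℕ → ℤ × ℤ) (z : ℤ) : Set (ℕ × ℕ) :=
  { cd | ∃ k : ℤ, ArisesFrom n P Tc z cd.1 cd.2 k }

/-- `S₁(x)` for a point `x` of `D(P)` with label `m`: roots of `S(P)` arising from the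
rows strictly above the row of `x`, together with those arising from the row of `x`
of the form `α_{cd}` with `c ≥ m`. -/
def S1x (n : ℕ) (P : PartialQuiver n) (Tc : ℕ × ℕ → ℤ × ℤ) (z : ℤ)
    (x : ℤ × ℤ) (m : ℕ) : Set (ℕ × ℕ) :=
  { cd | (∃ k : ℤ, keyOf x < k ∧ ArisesFrom n P Tc z cd.1 cd.2 k) ∨
      (ArisesFrom n P Tc z cd.1 cd.2 (keyOf x) ∧ m ≤ cd.1) }

/-- `S₂(x)`: the roots `α_{md}` cut off from roots `α_{c'd} ∈ S(P)` arising from the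
row of `x` with `c' < m`. -/
def S2x (n : ℕ) (P : PartialQuiver n) (Tc : ℕ × ℕ → ℤ × ℤ) (z : ℤ)
    (x : ℤ × ℤ) (m : ℕ) : Set (ℕ × ℕ) :=
  { cd | cd.1 = m ∧ m < cd.2 ∧ ∃ c' : ℕ, c' < m ∧ ArisesFrom n P Tc z c' cd.2 (keyOf x) }

/-- `S(x) = S₁(x) ∪ S₂(x)`. -/
def Sx (n : ℕ) (P : PartialQuiver n) (Tc : ℕ × ℕ → ℤ × ℤ) (z : ℤ)
    (x : ℤ × ℤ) (m : ℕ) : Set (ℕ × ℕ) :=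
  S1x n P Tc z x m ∪ S2x n P Tc z x m

/-! ### Reading off the diagram: the sequence `μ(P)` -/

/-- The labels (with multiplicity) of the points of the diagonal row of `D(P)` with key
`k` having `x`-coordinate `≥ xlo`, read from top-left to bottom-right. -/
def rowListP (n : ℕ) (P : PartialQuiver n) (Tc : ℕ × ℕ → ℤ × ℤ) (k : ℤ) (xlo : ℤ) :
    List ℕ :=
  ((List.range ((maxX n P Tc - minX n P Tc).toNat + 1)).map
      (fun t => minX n P Tc + (t : ℤ))).flatMap
    (fun xx => if xlo ≤ xx ∧ (xx, k - xx) ∈ pointsD n P Tc then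
        List.replicate (multD n P Tc (xx, k - xx)) (labelD n P Tc (xx, k - xx)) else [])

/-- The sequence `μ(P)`: the diagonal rows read from the last (bottom left) to the
first (top right), each row from top-left to bottom-right, labels repeated according
to multiplicity. -/
def muP (n : ℕ) (P : PartialQuiver n) (Tc : ℕ × ℕ → ℤ × ℤ) : List ℕ :=
  ((List.range ((maxKey n P Tc - minKey n P Tc).toNat + 1)).map
      (fun t => minKey n P Tc + (t : ℤ))).flatMap
    (fun k => rowListP n P Tc k (minX n P Tc))

/-- The list of operator indices applied (in order of application) to reach the point
`x`: the rows `1, …, a-1` in turn, each read from its bottom-right end to its top-left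
end, then the row of `x` from its bottom-right end up to and including `x`. -/
def opsTo (n : ℕ) (P : PartialQuiver n) (Tc : ℕ × ℕ → ℤ × ℤ) (x : ℤ × ℤ) : List ℕ :=
  (((List.range (((maxKey n P Tc - keyOf x) / 2).toNat)).map
      (fun t => maxKey n P Tc - 2 * (t : ℤ))).flatMap
    (fun k => (rowListP n P Tc k (minX n P Tc)).reverse)) ++
  (rowListP n P Tc (keyOf x) x.1).reverse

/-- The word whose letters are, for `r = 1, …, k` in order, the letter `i_r` of `w`
repeated `(v_P)_r` times. -/
def FwordP (n : ℕ) (w : List ℕ) (P : PartialQuiver n) : List ℕ :=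
  (List.range w.length).flatMap (fun r0 => List.replicate (vP n w P (r0 + 1)) (letterAt w (r0 + 1)))

/-- The word whose letters are, for `r = 1, …, k` in order, the letter `i_r` of `w`
repeated `(v_j)_r` times. -/
def FwordJ (n : ℕ) (w : List ℕ) (j : ℕ) : List ℕ :=
  (List.range w.length).flatMap (fun r0 => List.replicate (vj n w j (r0 + 1)) (letterAt w (r0 + 1)))

/-! ### The diagram `D(j)`, `j ∈ [1,n]` : a single type `L` rectangle with
`a = j`, `b = j + 1`. -/

def InRectJ (n j : ℕ) (T0 : ℤ × ℤ) (x : ℤ × ℤ) : Prop :=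
  ∃ u v : ℕ, u < j ∧ v < n + 1 - j ∧ x = rectPt T0 u v

def pointsDJ (n j : ℕ) (T0 : ℤ × ℤ) : Finset (ℤ × ℤ) :=
  (Finset.range j ×ˢ Finset.range (n + 1 - j)).image (fun uv => rectPt T0 uv.1 uv.2)

def HasLabelJ (n j : ℕ) (T0 : ℤ × ℤ) (x : ℤ × ℤ) (m : ℕ) : Prop :=
  ∃ u v : ℕ, u < j ∧ v < n + 1 - j ∧ x = rectPt T0 u v ∧ m = 1 + u + v

def labelDJ (n j : ℕ) (T0 : ℤ × ℤ) (x : ℤ × ℤ) : ℕ :=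
  sInf { m | HasLabelJ n j T0 x m }

def maxKeyJ (n j : ℕ) (T0 : ℤ × ℤ) : ℤ := ((pointsDJ n j T0).image keyOf).max.unbotD 0
def minKeyJ (n j : ℕ) (T0 : ℤ × ℤ) : ℤ := ((pointsDJ n j T0).image keyOf).min.untopD 0
def maxXJ (n j : ℕ) (T0 : ℤ × ℤ) : ℤ := ((pointsDJ n j T0).image Prod.fst).max.unbotD 0
def minXJ (n j : ℕ) (T0 : ℤ × ℤ) : ℤ := ((pointsDJ n j T0).image Prod.fst).min.untopD 0

/-- `α_{cd}` arises from the diagonal row of `D(j)` with key `k`: that row consists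
exactly of points labelled `c, …, d-1` in order. -/
def ArisesJ (n j : ℕ) (T0 : ℤ × ℤ) (c d : ℕ) (k : ℤ) : Prop :=
  c < d ∧ ∃ p : ℤ × ℤ,
    ({ x : ℤ × ℤ | keyOf x = k ∧ InRectJ n j T0 x } =
      { y : ℤ × ℤ | ∃ t : ℕ, t ≤ d - c - 1 ∧ y = (p.1 + (t : ℤ), p.2 - (t : ℤ)) }) ∧
    ∀ t : ℕ, t ≤ d - c - 1 → HasLabelJ n j T0 (p.1 + (t : ℤ), p.2 - (t : ℤ)) (c + t)

def SJ (n j : ℕ) (T0 : ℤ × ℤ) : Set (ℕ × ℕ) :=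
  { cd | ∃ k : ℤ, ArisesJ n j T0 cd.1 cd.2 k }

def S1xJ (n j : ℕ) (T0 : ℤ × ℤ) (x : ℤ × ℤ) (m : ℕ) : Set (ℕ × ℕ) :=
  { cd | (∃ k : ℤ, keyOf x < k ∧ ArisesJ n j T0 cd.1 cd.2 k) ∨
      (ArisesJ n j T0 cd.1 cd.2 (keyOf x) ∧ m ≤ cd.1) }

def S2xJ (n j : ℕ) (T0 : ℤ × ℤ) (x : ℤ × ℤ) (m : ℕ) : Set (ℕ × ℕ) :=
  { cd | cd.1 = m ∧ m < cd.2 ∧ ∃ c' : ℕ, c' < m ∧ ArisesJ n j T0 c' cd.2 (keyOf x) }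

def SxJ (n j : ℕ) (T0 : ℤ × ℤ) (x : ℤ × ℤ) (m : ℕ) : Set (ℕ × ℕ) :=
  S1xJ n j T0 x m ∪ S2xJ n j T0 x m

/-- The sequence `μ(j)`: rows of `D(j)` from bottom-left to top-right, each row from
top-left to bottom-right (all multiplicities are `1`). -/
def muJ (n j : ℕ) : List ℕ :=
  (List.range j).flatMap (fun t => (List.range (n + 1 - j)).map (fun v => 1 + (j - 1 - t) + v))

def rowListJ (n j : ℕ) (T0 : ℤ × ℤ) (k : ℤ) (xlo : ℤ) : List ℕ :=
  ((List.range ((maxXJ n j T0 - minXJ n j T0).toNat + 1)).map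
      (fun t => minXJ n j T0 + (t : ℤ))).flatMap
    (fun xx => if xlo ≤ xx ∧ (xx, k - xx) ∈ pointsDJ n j T0 then
        [labelDJ n j T0 (xx, k - xx)] else [])

def opsToJ (n j : ℕ) (T0 : ℤ × ℤ) (x : ℤ × ℤ) : List ℕ :=
  (((List.range (((maxKeyJ n j T0 - keyOf x) / 2).toNat)).map
      (fun t => maxKeyJ n j T0 - 2 * (t : ℤ))).flatMap
    (fun k => (rowListJ n j T0 k (minXJ n j T0)).reverse)) ++
  (rowListJ n j T0 (keyOf x) x.1).reverse

/-! ### Reineke's description of the Kashiwara operators -/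

/-- `f_{ij} = Σ_{l=j}^{n+1} v_{il} - Σ_{l=j+1}^{n+1} v_{i+1,l}`. -/
def fRein (n : ℕ) (v : ℕ × ℕ → ℕ) (i j : ℕ) : ℤ :=
  (∑ l ∈ Finset.Icc j (n + 1), (v (i, l) : ℤ)) -
    ∑ l ∈ Finset.Icc (j + 1) (n + 1), (v (i + 1, l) : ℤ)

/-- The minimal `j ∈ (i, n+1]` at which `f_{ij}` is maximal. -/
def j0R (n : ℕ) (v : ℕ × ℕ → ℕ) (i : ℕ) : ℕ :=
  sInf { j : ℕ | i + 1 ≤ j ∧ j ≤ n + 1 ∧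
    ∀ j' : ℕ, i + 1 ≤ j' → j' ≤ n + 1 → fRein n v i j' ≤ fRein n v i j }

/-- The Reineke operator `F̃_i`: increase `v_{i,j₀}` by one and (if `j₀ > i + 1`)
decrease `v_{i+1,j₀}` by one. -/
def FRein (n i : ℕ) (v : ℕ × ℕ → ℕ) : ℕ × ℕ → ℕ := fun cd =>
  if cd = (i, j0R n v i) then v cd + 1
  else if cd = (i + 1, j0R n v i) ∧ i + 1 < j0R n v i then v cd - 1
  else v cd

/-- The `0/1` indicator vector of a set of positive roots. -/
def indVec (S : Set (ℕ × ℕ)) : ℕ × ℕ → ℕ := fun cd => if cd ∈ S then 1 else 0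


/-! Machinery for STATEMENT 11: the symbol sequence attached to `v` and `i`, its
reduction, and the distinguished symbol. -/

/-- The symbols `0`, `−`, `+`. -/
inductive Sym3 : Type
  | zero : Sym3
  | minus : Sym3
  | plus : Sym3
deriving DecidableEq

/-- The pair `x_p = (v_{i,i+p+1}, v_{i+1,i+p+1})`, with the convention
`v_{i+1,i+1} = 1 - v_{i,i+1}` for `p = 0`. -/
def pairAt (v : ℕ × ℕ → ℕ) (i p : ℕ) : ℕ × ℕ :=
  (v (i, i + p + 1), if p = 0 then 1 - v (i, i + 1) else v (i + 1, i + p + 1))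

/-- The symbol encoding `x_p`: `(1,0) ↦ +`, `(0,1) ↦ −`, `(0,0) ↦ 0`. -/
def symAt (v : ℕ × ℕ → ℕ) (i p : ℕ) : Sym3 :=
  if (pairAt v i p).1 = 1 then Sym3.plus
  else if (pairAt v i p).2 = 1 then Sym3.minus
  else Sym3.zero

/-- The sequence of symbols, indexed by `p = 0, 1, …, n - i`. -/
def seq0 (n i : ℕ) (v : ℕ × ℕ → ℕ) : List (ℕ × Sym3) :=
  (List.range (n - i + 1)).map (fun p => (p, symAt v i p))

/-- Delete all non-initial `0`'s. -/
def phase1 : List (ℕ × Sym3) → List (ℕ × Sym3)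
  | [] => []
  | e :: tl => e :: tl.filter (fun f => f.2 ≠ Sym3.zero)

/-- Delete a non-initial adjacent pair of symbols `+,−`. -/
def PairDel (l l' : List (ℕ × Sym3)) : Prop :=
  ∃ (l1 l2 : List (ℕ × Sym3)) (e f : ℕ × Sym3),
    l1 ≠ [] ∧ e.2 = Sym3.plus ∧ f.2 = Sym3.minus ∧
    l = l1 ++ e :: f :: l2 ∧ l' = l1 ++ l2

/-- The length of the initial symbol: `2` if the sequence begins with the pair `+,−`
(which then counts as the initial symbol), else `1`. -/
def initLen (l : List (ℕ × Sym3)) : ℕ :=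
  if (l.map Prod.snd).take 2 = [Sym3.plus, Sym3.minus] then 2 else 1

/-! Auxiliary machinery for stmt11. -/

def aE (v : ℕ × ℕ → ℕ) (i p : ℕ) : ℤ := (v (i, i + p + 1) : ℤ)

def bE (v : ℕ × ℕ → ℕ) (i p : ℕ) : ℤ := if p = 0 then 0 else (v (i + 1, i + p + 1) : ℤ)

def wE (v : ℕ × ℕ → ℕ) (i p : ℕ) : ℤ := bE v i p - aE v i p

def GG (n : ℕ) (v : ℕ × ℕ → ℕ) (i q : ℕ) : ℤ := fRein n v i (i + q + 1)

def Ph (n : ℕ) (v : ℕ × ℕ → ℕ) (i q : ℕ) : ℤ :=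
  fRein n v i (i + 1) + ∑ r ∈ Finset.range q, wE v i r

lemma Ph_succ (n : ℕ) (v : ℕ × ℕ → ℕ) (i q : ℕ) :
    Ph n v i (q + 1) = Ph n v i q + wE v i q := by
  simp [Ph, Finset.sum_range_succ, add_assoc]

lemma fRein_step (n : ℕ) (v : ℕ × ℕ → ℕ) (i j : ℕ) (hj : j ≤ n) :
    fRein n v i j = (v (i, j) : ℤ) - (v (i + 1, j + 1) : ℤ) + fRein n v i (j + 1) := by
  have h1 : Finset.Icc j (n + 1) = insert j (Finset.Icc (j + 1) (n + 1)) := by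
    ext x; simp [Finset.mem_Icc]; omega
  have h2 : Finset.Icc (j + 1) (n + 1) = insert (j + 1) (Finset.Icc (j + 2) (n + 1)) := by
    ext x; simp [Finset.mem_Icc]; omega
  have e1 : ∑ l ∈ Finset.Icc j (n + 1), (v (i, l) : ℤ)
      = (v (i, j) : ℤ) + ∑ l ∈ Finset.Icc (j + 1) (n + 1), (v (i, l) : ℤ) := by
    rw [h1, Finset.sum_insert (by simp)]
  have e2 : ∑ l ∈ Finset.Icc (j + 1) (n + 1), (v (i + 1, l) : ℤ)
      = (v (i + 1, j + 1) : ℤ) + ∑ l ∈ Finset.Icc (j + 2) (n + 1), (v (i + 1, l) : ℤ) := by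
    rw [h2, Finset.sum_insert (by simp)]
  unfold fRein
  rw [e1, e2]
  ring

lemma GG_succ (n : ℕ) (v : ℕ × ℕ → ℕ) (i : ℕ) (hin : i ≤ n) (q : ℕ) (hq : q + 1 ≤ n - i) :
    GG n v i (q + 1) = GG n v i q - aE v i q + bE v i (q + 1) := by
  have hj : i + q + 1 ≤ n := by omega
  have := fRein_step n v i (i + q + 1) hj
  have hb : bE v i (q + 1) = (v (i + 1, i + q + 1 + 1) : ℤ) := by
    simp only [bE, if_neg (Nat.succ_ne_zero q)]
    norm_num
    ring_nf
  unfold GG aE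
  rw [hb]
  have : i + (q + 1) + 1 = (i + q + 1) + 1 := by ring
  rw [this]
  linarith [fRein_step n v i (i + q + 1) hj]

lemma GG_eq_Ph (n : ℕ) (v : ℕ × ℕ → ℕ) (i : ℕ) (hin : i ≤ n) :
    ∀ q, q ≤ n - i → GG n v i q = Ph n v i q + bE v i q := by
  intro q
  induction q with
  | zero => intro _; simp [GG, Ph, bE]
  | succ q ih =>
    intro hq
    rw [GG_succ n v i hin q hq, Ph_succ, ih (by omega)]
    simp [wE]
    ring

lemma bE_zero (v : ℕ × ℕ → ℕ) (i : ℕ) : bE v i 0 = 0 := by simp [bE]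

lemma sym_plus {n i : ℕ} {v : ℕ × ℕ → ℕ} (hi1 : 1 ≤ i) (hin : i ≤ n)
    (h01 : ∀ c d : ℕ, 1 ≤ c → c < d → d ≤ n + 1 → v (c, d) ≤ 1)
    (hnd : ∀ d : ℕ, i + 1 < d → d ≤ n + 1 → ¬ (v (i, d) = 1 ∧ v (i + 1, d) = 1))
    {p : ℕ} (hp : p ≤ n - i) (hs : symAt v i p = Sym3.plus) :
    aE v i p = 1 ∧ bE v i p = 0 ∧ wE v i p = -1 := by
  unfold symAt at hs
  by_cases h1 : (pairAt v i p).1 = 1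
  · simp only [pairAt] at h1
    have ha : aE v i p = 1 := by simp [aE, h1]
    have hb : bE v i p = 0 := by
      rcases Nat.eq_zero_or_pos p with hp0 | hp0
      · simp [bE, hp0]
      · have hne : p ≠ 0 := by omega
        have hd := hnd (i + p + 1) (by omega) (by omega)
        have hle2 := h01 (i + 1) (i + p + 1) (by omega) (by omega) (by omega)
        have hv : v (i + 1, i + p + 1) = 0 := by
          rcases Nat.lt_or_ge (v (i + 1, i + p + 1)) 1 with h | h
          · omega
          · exact absurd ⟨h1, by omega⟩ hd
        simp [bE, hne, hv]
    exact ⟨ha, hb, by simp [wE, ha, hb]⟩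
  · rw [if_neg h1] at hs
    by_cases h2 : (pairAt v i p).2 = 1
    · rw [if_pos h2] at hs; simp at hs
    · rw [if_neg h2] at hs; simp at hs

lemma sym_minus {n i : ℕ} {v : ℕ × ℕ → ℕ} (hi1 : 1 ≤ i) (hin : i ≤ n)
    (h01 : ∀ c d : ℕ, 1 ≤ c → c < d → d ≤ n + 1 → v (c, d) ≤ 1)
    {p : ℕ} (hp : p ≤ n - i) (hs : symAt v i p = Sym3.minus) :
    v (i, i + p + 1) = 0 ∧ aE v i p = 0 ∧
      (p = 0 → bE v i p = 0 ∧ wE v i p = 0) ∧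
      (p ≠ 0 → v (i + 1, i + p + 1) = 1 ∧ bE v i p = 1 ∧ wE v i p = 1) := by
  unfold symAt at hs
  by_cases h1 : (pairAt v i p).1 = 1
  · rw [if_pos h1] at hs; simp at hs
  · rw [if_neg h1] at hs
    by_cases h2 : (pairAt v i p).2 = 1
    · simp only [pairAt] at h1 h2
      have hle := h01 i (i + p + 1) hi1 (by omega) (by omega)
      have hv0 : v (i, i + p + 1) = 0 := by omega
      have ha : aE v i p = 0 := by simp [aE, hv0]
      refine ⟨hv0, ha, ?_, ?_⟩
      · intro hp0
        subst hp0
        exact ⟨by simp [bE], by simp [wE, bE, ha]⟩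
      · intro hp0
        rw [if_neg hp0] at h2
        refine ⟨h2, by simp [bE, hp0, h2], by simp [wE, ha, bE, hp0, h2]⟩
    · rw [if_neg h2] at hs; simp at hs

lemma sym_zero {n i : ℕ} {v : ℕ × ℕ → ℕ} (hi1 : 1 ≤ i) (hin : i ≤ n)
    (h01 : ∀ c d : ℕ, 1 ≤ c → c < d → d ≤ n + 1 → v (c, d) ≤ 1)
    {p : ℕ} (hp : p ≤ n - i) (hs : symAt v i p = Sym3.zero) :
    aE v i p = 0 ∧ bE v i p = 0 ∧ wE v i p = 0 := by
  unfold symAt at hs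
  by_cases h1 : (pairAt v i p).1 = 1
  · rw [if_pos h1] at hs; simp at hs
  · rw [if_neg h1] at hs
    by_cases h2 : (pairAt v i p).2 = 1
    · rw [if_pos h2] at hs; simp at hs
    · simp only [pairAt] at h1 h2
      have hle := h01 i (i + p + 1) hi1 (by omega) (by omega)
      have ha : aE v i p = 0 := by simp only [aE]; omega
      have hb : bE v i p = 0 := by
        rcases Nat.eq_zero_or_pos p with hp0 | hp0
        · simp [bE, hp0]
        · have hne : p ≠ 0 := by omega
          rw [if_neg hne] at h2
          have hle2 := h01 (i + 1) (i + p + 1) (by omega) (by omega) (by omega)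
          simp only [bE, if_neg hne]
          omega
      exact ⟨ha, hb, by simp [wE, ha, hb]⟩

def RR (n : ℕ) (v : ℕ × ℕ → ℕ) (i : ℕ) (x y : ℕ × Sym3) : Prop :=
  x.1 < y.1 ∧ Ph n v i y.1 = Ph n v i x.1 + wE v i x.1 ∧
    ∀ q, x.1 < q → q < y.1 →
      Ph n v i q ≤ Ph n v i x.1 + wE v i x.1 ∧ GG n v i q ≤ Ph n v i x.1 + wE v i x.1

def TL (n : ℕ) (v : ℕ × ℕ → ℕ) (i : ℕ) (x : ℕ × Sym3) : Prop :=
  ∀ q, x.1 < q → q ≤ n - i →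
    Ph n v i q ≤ Ph n v i x.1 + wE v i x.1 ∧ GG n v i q ≤ Ph n v i x.1 + wE v i x.1

def Inv (n : ℕ) (v : ℕ × ℕ → ℕ) (i : ℕ) (L : List (ℕ × Sym3)) : Prop :=
  L.head? = some (0, symAt v i 0) ∧
  (∀ e ∈ L, e.2 = symAt v i e.1 ∧ e.1 ≤ n - i) ∧
  (∀ e ∈ L.tail, e.2 ≠ Sym3.zero) ∧
  List.Chain' (RR n v i) L ∧
  (∀ x, L.getLast? = some x → TL n v i x)

section Glue

variable {n i : ℕ} {v : ℕ × ℕ → ℕ}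

lemma glue_core (hi1 : 1 ≤ i) (hin : i ≤ n)
    (h01 : ∀ c d : ℕ, 1 ≤ c → c < d → d ≤ n + 1 → v (c, d) ≤ 1)
    (hnd : ∀ d : ℕ, i + 1 < d → d ≤ n + 1 → ¬ (v (i, d) = 1 ∧ v (i + 1, d) = 1))
    {x e f : ℕ × Sym3}
    (hes : symAt v i e.1 = Sym3.plus) (heN : e.1 ≤ n - i)
    (hfs : symAt v i f.1 = Sym3.minus) (hfN : f.1 ≤ n - i)
    (hxe : RR n v i x e) (hef : RR n v i e f) :
    Ph n v i f.1 = Ph n v i x.1 + wE v i x.1 - 1 ∧ wE v i f.1 = 1 ∧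
    (∀ q, x.1 < q → q ≤ f.1 →
      Ph n v i q ≤ Ph n v i x.1 + wE v i x.1 ∧ GG n v i q ≤ Ph n v i x.1 + wE v i x.1) := by
  obtain ⟨hae, hbe, hwe⟩ := sym_plus hi1 hin h01 hnd heN hes
  have hfne : f.1 ≠ 0 := by
    have := hxe.1; have := hef.1; omega
  obtain ⟨_, _, _, hm⟩ := sym_minus hi1 hin h01 hfN hfs
  obtain ⟨hv1, hbf, hwf⟩ := hm hfne
  have hPhe : Ph n v i e.1 = Ph n v i x.1 + wE v i x.1 := hxe.2.1
  have hPhf : Ph n v i f.1 = Ph n v i x.1 + wE v i x.1 - 1 := by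
    rw [hef.2.1, hPhe, hwe]; ring
  refine ⟨hPhf, hwf, ?_⟩
  intro q hq1 hq2
  rcases Nat.lt_trichotomy q e.1 with hlt | heq | hgt
  · exact hxe.2.2 q hq1 hlt
  · have hG : GG n v i e.1 = Ph n v i e.1 + bE v i e.1 := GG_eq_Ph n v i hin e.1 heN
    rw [heq, hG, hPhe, hbe]
    constructor <;> linarith
  · rcases Nat.lt_or_ge q f.1 with hlt | hge
    · have := hef.2.2 q hgt hlt
      rw [hPhe, hwe] at this
      constructor <;> linarith [this.1, this.2]
    · have heqf : q = f.1 := by omega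
      have hG : GG n v i f.1 = Ph n v i f.1 + bE v i f.1 := GG_eq_Ph n v i hin f.1 hfN
      rw [heqf, hG, hPhf, hbf]
      constructor <;> linarith

lemma glue_R (hi1 : 1 ≤ i) (hin : i ≤ n)
    (h01 : ∀ c d : ℕ, 1 ≤ c → c < d → d ≤ n + 1 → v (c, d) ≤ 1)
    (hnd : ∀ d : ℕ, i + 1 < d → d ≤ n + 1 → ¬ (v (i, d) = 1 ∧ v (i + 1, d) = 1))
    {x e f y : ℕ × Sym3}
    (hes : symAt v i e.1 = Sym3.plus) (heN : e.1 ≤ n - i)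
    (hfs : symAt v i f.1 = Sym3.minus) (hfN : f.1 ≤ n - i)
    (hxe : RR n v i x e) (hef : RR n v i e f) (hfy : RR n v i f y) :
    RR n v i x y := by
  obtain ⟨hPhf, hwf, hgap⟩ := glue_core hi1 hin h01 hnd hes heN hfs hfN hxe hef
  refine ⟨by have := hxe.1; have := hef.1; have := hfy.1; omega, ?_, ?_⟩
  · rw [hfy.2.1, hPhf, hwf]; ring
  · intro q hq1 hq2
    rcases Nat.lt_or_ge f.1 q with hgt | hle
    · have := hfy.2.2 q hgt hq2
      rw [hPhf, hwf] at this
      constructor <;> linarith [this.1, this.2]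
    · exact hgap q hq1 hle

lemma glue_TL (hi1 : 1 ≤ i) (hin : i ≤ n)
    (h01 : ∀ c d : ℕ, 1 ≤ c → c < d → d ≤ n + 1 → v (c, d) ≤ 1)
    (hnd : ∀ d : ℕ, i + 1 < d → d ≤ n + 1 → ¬ (v (i, d) = 1 ∧ v (i + 1, d) = 1))
    {x e f : ℕ × Sym3}
    (hes : symAt v i e.1 = Sym3.plus) (heN : e.1 ≤ n - i)
    (hfs : symAt v i f.1 = Sym3.minus) (hfN : f.1 ≤ n - i)
    (hxe : RR n v i x e) (hef : RR n v i e f) (hfT : TL n v i f) :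
    TL n v i x := by
  obtain ⟨hPhf, hwf, hgap⟩ := glue_core hi1 hin h01 hnd hes heN hfs hfN hxe hef
  intro q hq1 hq2
  rcases Nat.lt_or_ge f.1 q with hgt | hle
  · have := hfT q hgt hq2
    rw [hPhf, hwf] at this
    constructor <;> linarith [this.1, this.2]
  · exact hgap q hq1 hle

lemma inv_pairdel (hi1 : 1 ≤ i) (hin : i ≤ n)
    (h01 : ∀ c d : ℕ, 1 ≤ c → c < d → d ≤ n + 1 → v (c, d) ≤ 1)
    (hnd : ∀ d : ℕ, i + 1 < d → d ≤ n + 1 → ¬ (v (i, d) = 1 ∧ v (i + 1, d) = 1))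
    {l l' : List (ℕ × Sym3)} (hp : PairDel l l') (hI : Inv n v i l) :
    Inv n v i l' := by
  obtain ⟨l1, l2, e, f, h1ne, he2, hf2, hle, hle'⟩ := hp
  obtain ⟨a, t, rfl⟩ : ∃ a t, l1 = a :: t := by
    cases l1 with
    | nil => exact absurd rfl h1ne
    | cons a t => exact ⟨a, t, rfl⟩
  subst hle hle'
  obtain ⟨hhead, helem, htail, hchain, hlast⟩ := hI
  have heMem : e ∈ (a :: t) ++ e :: f :: l2 := by simp
  have hfMem : f ∈ (a :: t) ++ e :: f :: l2 := by simp
  have hec := helem e heMem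
  have hfc := helem f hfMem
  have hes : symAt v i e.1 = Sym3.plus := by rw [← hec.1, he2]
  have hfs : symAt v i f.1 = Sym3.minus := by rw [← hfc.1, hf2]
  unfold List.Chain' at hchain; rw [List.isChain_append] at hchain
  obtain ⟨hc1, hc2, hcx⟩ := hchain
  have hef : RR n v i e f := (List.isChain_cons_cons.mp hc2).1
  have hcf : List.Chain' (RR n v i) (f :: l2) := (List.isChain_cons_cons.mp hc2).2
  have hfy : ∀ y ∈ l2.head?, RR n v i f y := (List.isChain_cons.mp hcf).1
  have hcl2 : List.Chain' (RR n v i) l2 := (List.isChain_cons.mp hcf).2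
  have hglast : (a :: t).getLast? = some ((a :: t).getLast (by simp)) :=
    List.getLast?_eq_getLast (by simp)
  have hxe : RR n v i ((a :: t).getLast (by simp)) e := by
    apply hcx
    · exact hglast
    · rfl
  refine ⟨?_, ?_, ?_, ?_, ?_⟩
  · simpa using hhead
  · intro e' he'
    apply helem
    simp only [List.mem_append, List.mem_cons] at he' ⊢
    tauto
  · intro e' he'
    apply htail
    simp only [List.cons_append, List.tail_cons, List.mem_append, List.mem_cons] at he' ⊢
    tauto
  · unfold List.Chain'; rw [List.isChain_append]
    refine ⟨hc1, hcl2, ?_⟩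
    intro x hx y hy
    rw [hglast] at hx
    have hx' : (a :: t).getLast (by simp) = x := by
      simpa using hx
    subst hx'
    exact glue_R hi1 hin h01 hnd hes hec.2 hfs hfc.2 hxe hef (hfy y hy)
  · cases l2 with
    | nil =>
      intro x hx
      have hlf : ((a :: t) ++ e :: f :: ([] : List (ℕ × Sym3))).getLast? = some f := by
        rw [List.getLast?_append_of_ne_nil _ (by simp)]
        simp
      have hfT : TL n v i f := hlast f hlf
      have : x = (a :: t).getLast (by simp) := by
        rw [List.append_nil] at hx
        rw [hglast] at hx
        simpa using hx.symm
      subst this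
      exact glue_TL hi1 hin h01 hnd hes hec.2 hfs hfc.2 hxe hef hfT
    | cons y l2' =>
      intro x hx
      apply hlast
      rw [List.getLast?_append_of_ne_nil _ (by simp : (e :: f :: y :: l2') ≠ []),
        List.getLast?_cons_cons, List.getLast?_cons_cons]
      rw [List.getLast?_append_of_ne_nil _ (by simp)] at hx
      exact hx

end Glue

def Lfrom (v : ℕ × ℕ → ℕ) (i c m : ℕ) : List (ℕ × Sym3) :=
  (List.range m).map (fun t => (c + t, symAt v i (c + t)))

lemma Lfrom_succ (v : ℕ × ℕ → ℕ) (i c m : ℕ) :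
    Lfrom v i c (m + 1) = (c, symAt v i c) :: Lfrom v i (c + 1) m := by
  unfold Lfrom
  rw [List.range_succ_eq_map, List.map_cons, List.map_map]
  congr 1
  apply List.map_congr_left
  intro t _
  have h : c + (t + 1) = c + 1 + t := by omega
  simp [Function.comp, h]

section Est

variable {n i : ℕ} {v : ℕ × ℕ → ℕ}

lemma Ph_const (x1 q : ℕ) (h : x1 < q) (hz : ∀ r, x1 < r → r < q → wE v i r = 0) :
    Ph n v i q = Ph n v i x1 + wE v i x1 := by
  induction q, h using Nat.le_induction with
  | base => exact Ph_succ n v i x1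
  | succ q hq ih =>
    rw [Ph_succ, ih (fun r h1 h2 => hz r h1 (by omega)), hz q (by omega) (by omega)]
    ring

lemma inv_est_aux (hi1 : 1 ≤ i) (hin : i ≤ n)
    (h01 : ∀ c d : ℕ, 1 ≤ c → c < d → d ≤ n + 1 → v (c, d) ≤ 1) :
    ∀ (m : ℕ) (x : ℕ × Sym3) (c : ℕ),
    x.2 = symAt v i x.1 → x.1 ≤ n - i → x.1 < c → c + m = n - i + 1 →
    (∀ q, x.1 < q → q < c → symAt v i q = Sym3.zero) →
    List.Chain' (RR n v i) (x :: (Lfrom v i c m).filter (fun f => f.2 ≠ Sym3.zero)) ∧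
    (∀ y, (x :: (Lfrom v i c m).filter (fun f => f.2 ≠ Sym3.zero)).getLast? = some y →
      TL n v i y) := by
  intro m
  induction m with
  | zero =>
    intro x c hx1 hx2 hx3 hx4 hx5
    constructor
    · simp [Lfrom, List.Chain']
    · intro y hy
      simp [Lfrom] at hy
      subst hy
      intro q hq1 hq2
      have hqc : q < c := by omega
      have hPh : Ph n v i q = Ph n v i x.1 + wE v i x.1 := by
        apply Ph_const x.1 q hq1
        intro r h1 h2
        exact (sym_zero hi1 hin h01 (by omega) (hx5 r h1 (by omega))).2.2
      have hbq : bE v i q = 0 :=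
        (sym_zero hi1 hin h01 (by omega) (hx5 q hq1 hqc)).2.1
      rw [GG_eq_Ph n v i hin q hq2, hPh, hbq]
      constructor <;> linarith
  | succ m ih =>
    intro x c hx1 hx2 hx3 hx4 hx5
    rw [Lfrom_succ]
    by_cases hz : symAt v i c = Sym3.zero
    · rw [List.filter_cons, if_neg (by simp [hz])]
      apply ih x (c + 1) hx1 hx2 (by omega) (by omega)
      intro q h1 h2
      rcases Nat.lt_or_ge q c with h | h
      · exact hx5 q h1 h
      · have : q = c := by omega
        rw [this]; exact hz
    · rw [List.filter_cons, if_pos (by simpa using hz)]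
      have hcN : c ≤ n - i := by omega
      have ihc := ih (c, symAt v i c) (c + 1) rfl hcN (by omega) (by omega)
        (by intro q h1 h2; omega)
      have hgap : ∀ q, x.1 < q → q < c →
          Ph n v i q ≤ Ph n v i x.1 + wE v i x.1 ∧
          GG n v i q ≤ Ph n v i x.1 + wE v i x.1 := by
        intro q h1 h2
        have hPh : Ph n v i q = Ph n v i x.1 + wE v i x.1 := by
          apply Ph_const x.1 q h1
          intro r hr1 hr2
          exact (sym_zero hi1 hin h01 (by omega) (hx5 r hr1 (by omega))).2.2
        have hbq : bE v i q = 0 :=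
          (sym_zero hi1 hin h01 (by omega) (hx5 q h1 h2)).2.1
        rw [GG_eq_Ph n v i hin q (by omega), hPh, hbq]
        constructor <;> linarith
      have hRxc : RR n v i x (c, symAt v i c) := by
        refine ⟨hx3, ?_, hgap⟩
        rcases Nat.lt_or_ge (x.1 + 1) c with h | h
        · apply Ph_const x.1 c hx3
          intro r h1 h2
          exact (sym_zero hi1 hin h01 (by omega) (hx5 r h1 h2)).2.2
        · have : c = x.1 + 1 := by omega
          rw [this]; exact Ph_succ n v i x.1
      constructor
      · exact List.isChain_cons_cons.mpr ⟨hRxc, ihc.1⟩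
      · intro y hy
        rw [List.getLast?_cons_cons] at hy
        exact ihc.2 y hy

lemma inv_init (hi1 : 1 ≤ i) (hin : i ≤ n)
    (h01 : ∀ c d : ℕ, 1 ≤ c → c < d → d ≤ n + 1 → v (c, d) ≤ 1) :
    Inv n v i (phase1 (seq0 n i v)) := by
  have hseq : seq0 n i v = (0, symAt v i 0) :: Lfrom v i 1 (n - i) := by
    unfold seq0 Lfrom
    rw [List.range_succ_eq_map, List.map_cons, List.map_map]
    congr 1
    apply List.map_congr_left
    intro t _
    have h : 1 + t = t + 1 := by omega
    simp [Function.comp, h]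
  rw [hseq]
  show Inv n v i ((0, symAt v i 0) :: (Lfrom v i 1 (n - i)).filter (fun f => f.2 ≠ Sym3.zero))
  have haux := inv_est_aux hi1 hin h01 (n - i) (0, symAt v i 0) 1 rfl (by omega) (by omega)
    (by omega) (by intro q h1 h2; omega)
  refine ⟨rfl, ?_, ?_, haux.1, haux.2⟩
  · intro e he
    rcases List.mem_cons.mp he with h | h
    · subst h; exact ⟨rfl, by omega⟩
    · have h2 := List.mem_filter.mp h |>.1
      unfold Lfrom at h2
      simp only [List.mem_map, List.mem_range] at h2
      obtain ⟨t, ht, rfl⟩ := h2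
      exact ⟨rfl, by omega⟩
  · intro e he
    simp only [List.tail_cons] at he
    have := List.mem_filter.mp he |>.2
    simpa using this

end Est

section Extract

variable {n i : ℕ} {v : ℕ × ℕ → ℕ}

lemma lemA (hi1 : 1 ≤ i) (hin : i ≤ n)
    (h01 : ∀ c d : ℕ, 1 ≤ c → c < d → d ≤ n + 1 → v (c, d) ≤ 1)
    (hnd : ∀ d : ℕ, i + 1 < d → d ≤ n + 1 → ¬ (v (i, d) = 1 ∧ v (i + 1, d) = 1)) :
    ∀ (K : List (ℕ × Sym3)) (z : ℕ × Sym3),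
    (∀ e ∈ K, symAt v i e.1 = Sym3.plus ∧ e.1 ≤ n - i) →
    List.Chain' (RR n v i) (z :: K) →
    (∀ y, (z :: K).getLast? = some y → TL n v i y) →
    ∀ q, z.1 < q → q ≤ n - i → GG n v i q ≤ Ph n v i z.1 + wE v i z.1 := by
  intro K
  induction K with
  | nil =>
    intro z _ _ hTL q hq1 hq2
    exact (hTL z (by simp) q hq1 hq2).2
  | cons y K' ih =>
    intro z hK hchain hTL q hq1 hq2
    have hy := hK y (by simp)
    obtain ⟨hay, hby, hwy⟩ := sym_plus hi1 hin h01 hnd hy.2 hy.1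
    have hRzy : RR n v i z y := (List.isChain_cons_cons.mp hchain).1
    have hchain' : List.Chain' (RR n v i) (y :: K') := (List.isChain_cons_cons.mp hchain).2
    have hTL' : ∀ y', (y :: K').getLast? = some y' → TL n v i y' := by
      intro y' hy'
      exact hTL y' (by rw [List.getLast?_cons_cons]; exact hy')
    rcases Nat.lt_trichotomy q y.1 with hlt | heq | hgt
    · exact (hRzy.2.2 q hq1 hlt).2
    · rw [heq, GG_eq_Ph n v i hin y.1 hy.2, hRzy.2.1, hby]
      linarith
    · have := ih y (fun e he => hK e (by simp [he])) hchain' hTL' q hgt hq2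
      rw [hwy, hRzy.2.1] at this
      linarith

lemma lemB (hi1 : 1 ≤ i) (hin : i ≤ n)
    (h01 : ∀ c d : ℕ, 1 ≤ c → c < d → d ≤ n + 1 → v (c, d) ≤ 1)
    (hnd : ∀ d : ℕ, i + 1 < d → d ≤ n + 1 → ¬ (v (i, d) = 1 ∧ v (i + 1, d) = 1)) :
    ∀ (mr : List (ℕ × Sym3)) (z : ℕ × Sym3) (p : ℕ) (l2 : List (ℕ × Sym3)),
    (∀ e ∈ mr, symAt v i e.1 = Sym3.minus ∧ e.1 ≤ n - i) →
    (∀ e ∈ l2, symAt v i e.1 = Sym3.plus ∧ e.1 ≤ n - i) →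
    symAt v i p = Sym3.minus → p ≤ n - i →
    List.Chain' (RR n v i) (z :: (mr ++ (p, Sym3.minus) :: l2)) →
    (∀ y, (z :: (mr ++ (p, Sym3.minus) :: l2)).getLast? = some y → TL n v i y) →
    z.1 < p ∧
    GG n v i p = Ph n v i z.1 + wE v i z.1 + (mr.length : ℤ) + 1 ∧
    (∀ q, z.1 < q → q ≤ n - i →
      GG n v i q ≤ Ph n v i z.1 + wE v i z.1 + (mr.length : ℤ) + 1) ∧
    (∀ q, z.1 < q → q < p →
      GG n v i q < Ph n v i z.1 + wE v i z.1 + (mr.length : ℤ) + 1) := by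
  intro mr
  induction mr with
  | nil =>
    intro z p l2 _ hl2 hps hpN hchain hTL
    simp only [List.nil_append] at hchain hTL
    have hR : RR n v i z (p, Sym3.minus) := (List.isChain_cons_cons.mp hchain).1
    have hzp : z.1 < p := hR.1
    have hpne : p ≠ 0 := by omega
    obtain ⟨_, _, _, hm⟩ := sym_minus hi1 hin h01 hpN hps
    obtain ⟨_, hbp, hwp⟩ := hm hpne
    have hGp : GG n v i p = Ph n v i z.1 + wE v i z.1 + 1 := by
      rw [GG_eq_Ph n v i hin p hpN]
      have : Ph n v i (p, Sym3.minus).1 = Ph n v i z.1 + wE v i z.1 := hR.2.1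
      simp only at this
      rw [this, hbp]
    have hchain' : List.Chain' (RR n v i) ((p, Sym3.minus) :: l2) :=
      (List.isChain_cons_cons.mp hchain).2
    have hTL' : ∀ y', ((p, Sym3.minus) :: l2).getLast? = some y' → TL n v i y' := by
      intro y' hy'
      cases l2 with
      | nil =>
        apply hTL
        simpa using hy'
      | cons b l2' =>
        exact hTL y' (by rw [List.getLast?_cons_cons]; exact hy')
    have hafter := lemA hi1 hin h01 hnd l2 (p, Sym3.minus) hl2 hchain' hTL'
    simp only at hafter
    refine ⟨hzp, by simpa using hGp, ?_, ?_⟩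
    · intro q hq1 hq2
      rcases Nat.lt_trichotomy q p with hlt | heq | hgt
      · have := (hR.2.2 q hq1 hlt).2
        simp only [List.length_nil, Nat.cast_zero]
        linarith
      · rw [heq]; simp only [List.length_nil, Nat.cast_zero]; rw [hGp]; linarith
      · have := hafter q hgt hq2
        rw [hwp, hR.2.1] at this
        simp only [List.length_nil, Nat.cast_zero]
        linarith
    · intro q hq1 hq2
      have := (hR.2.2 q hq1 hq2).2
      simp only [List.length_nil, Nat.cast_zero]
      linarith
  | cons y mr' ih =>
    intro z p l2 hmr hl2 hps hpN hchain hTL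
    have hy := hmr y (by simp)
    have hR : RR n v i z y := (List.isChain_cons_cons.mp hchain).1
    have hyne : y.1 ≠ 0 := by have := hR.1; omega
    obtain ⟨_, _, _, hm⟩ := sym_minus hi1 hin h01 hy.2 hy.1
    obtain ⟨_, hby, hwy⟩ := hm hyne
    have hchain' : List.Chain' (RR n v i) (y :: (mr' ++ (p, Sym3.minus) :: l2)) := by
      have := (List.isChain_cons_cons.mp (show List.Chain' _ (z :: y :: _) by simpa using hchain)).2
      exact this
    have hTL' : ∀ y', (y :: (mr' ++ (p, Sym3.minus) :: l2)).getLast? = some y' →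
        TL n v i y' := by
      intro y' hy'
      apply hTL
      rw [show z :: ((y :: mr') ++ (p, Sym3.minus) :: l2)
            = z :: y :: (mr' ++ (p, Sym3.minus) :: l2) by simp,
        List.getLast?_cons_cons]
      exact hy'
    obtain ⟨hyp, hGp, hub, hsb⟩ :=
      ih y p l2 (fun e he => hmr e (by simp [he])) hl2 hps hpN hchain' hTL'
    have hlen : (((y :: mr').length : ℕ) : ℤ) = (mr'.length : ℤ) + 1 := by
      push_cast [List.length_cons]; ring
    have hPhy : Ph n v i y.1 = Ph n v i z.1 + wE v i z.1 := hR.2.1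
    refine ⟨by have := hR.1; omega, ?_, ?_, ?_⟩
    · rw [hGp, hPhy, hwy, hlen]; ring
    · intro q hq1 hq2
      rcases Nat.lt_trichotomy q y.1 with hlt | heq | hgt
      · have := (hR.2.2 q hq1 hlt).2
        have hc : (0 : ℤ) ≤ (mr'.length : ℤ) := Nat.cast_nonneg _
        rw [hlen]; linarith
      · rw [heq, GG_eq_Ph n v i hin y.1 hy.2, hPhy, hby, hlen]
        have hc : (0 : ℤ) ≤ (mr'.length : ℤ) := Nat.cast_nonneg _
        linarith
      · have := hub q hgt hq2
        rw [hPhy, hwy] at this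
        rw [hlen]; linarith
    · intro q hq1 hq2
      rcases Nat.lt_trichotomy q y.1 with hlt | heq | hgt
      · have := (hR.2.2 q hq1 hlt).2
        have hc : (0 : ℤ) ≤ (mr'.length : ℤ) := Nat.cast_nonneg _
        rw [hlen]; linarith
      · rw [heq, GG_eq_Ph n v i hin y.1 hy.2, hPhy, hby, hlen]
        have hc : (0 : ℤ) ≤ (mr'.length : ℤ) := Nat.cast_nonneg _
        linarith
      · have := hsb q hgt hq2
        rw [hPhy, hwy] at this
        rw [hlen]; linarith

end Extract

lemma adjdel {L' : List (ℕ × Sym3)} (hne : L' ≠ [])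
    (hstop : ¬ ∃ L'', PairDel L' L'') {u u' : List (ℕ × Sym3)} {e f : ℕ × Sym3}
    (ht : L'.tail = u ++ e :: f :: u') (he : e.2 = Sym3.plus) (hf : f.2 = Sym3.minus) :
    False := by
  obtain ⟨z, t, rfl⟩ : ∃ z t, L' = z :: t := by
    cases L' with
    | nil => exact absurd rfl hne
    | cons z t => exact ⟨z, t, rfl⟩
  simp only [List.tail_cons] at ht
  exact hstop ⟨(z :: u) ++ u', ⟨z :: u, u', e, f, by simp, he, hf, by rw [ht]; simp, rfl⟩⟩

lemma noplus {L' : List (ℕ × Sym3)} (hne : L' ≠ [])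
    (hzero : ∀ e ∈ L'.tail, e.2 ≠ Sym3.zero)
    (hstop : ¬ ∃ L'', PairDel L' L'') :
    ∀ (w u u' : List (ℕ × Sym3)) (e f : ℕ × Sym3),
    L'.tail = u ++ e :: (w ++ f :: u') → e.2 = Sym3.plus → f.2 = Sym3.minus → False := by
  intro w
  induction w with
  | nil =>
    intro u u' e f ht he hf
    exact adjdel hne hstop (by simpa using ht) he hf
  | cons g w' ihw =>
    intro u u' e f ht he hf
    have hg : g ∈ L'.tail := by rw [ht]; simp
    have hgz := hzero g hg
    cases hg2 : g.2 with
    | zero => exact hgz hg2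
    | minus =>
      exact adjdel (u := u) (u' := w' ++ f :: u') (e := e) (f := g) hne hstop
        (by rw [ht]; simp) he hg2
    | plus =>
      apply ihw (u ++ [e]) u' g f _ hg2 hf
      rw [ht]; simp

lemma last_minus : ∀ (l : List (ℕ × Sym3)), (∃ e ∈ l, e.2 = Sym3.minus) →
    ∃ u e u', l = u ++ e :: u' ∧ (e : ℕ × Sym3).2 = Sym3.minus ∧
      ∀ f ∈ u', (f : ℕ × Sym3).2 ≠ Sym3.minus := by
  intro l
  induction l with
  | nil => intro h; simp at h
  | cons x xs ih =>
    intro h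
    by_cases h2 : ∃ e ∈ xs, e.2 = Sym3.minus
    · obtain ⟨u, e, u', h1, h2', h3⟩ := ih h2
      exact ⟨x :: u, e, u', by rw [h1]; rfl, h2', h3⟩
    · obtain ⟨e, he, he2⟩ := h
      rcases List.mem_cons.mp he with rfl | hmem
      · exact ⟨[], e, xs, rfl, he2, fun f hf hf2 => h2 ⟨f, hf, hf2⟩⟩
      · exact absurd ⟨e, hmem, he2⟩ h2

/-- let `v` have `0/1` entries with `v_{id} = 1 = v_{i+1,d}` for no
`d > i+1`; reduce the symbol sequence of `v` (first deleting non-initial `0`'s, then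
repeatedly deleting non-initial adjacent `+,−` pairs until none remain).  If some `−`
occurs after the initial symbol, and the last `−` of the reduced sequence has original
index `p`, then `j₀ = i + p + 1`, `v_{i,i+p+1} = 0`, `v_{i+1,i+p+1} = 1`, and `F̃_i`
increases `v_{i,i+p+1}` by `1` and (when `p > 0`) decreases `v_{i+1,i+p+1}` by `1`.
Otherwise the initial symbol is distinguished, `p = 0`, `j₀ = i + 1` and `F̃_i`
increases `v_{i,i+1}` by `1`. -/
theorem stmt11 (n : ℕ) (hn : 1 ≤ n) (i : ℕ) (hi1 : 1 ≤ i) (hin : i ≤ n)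
    (v : ℕ × ℕ → ℕ)
    (h01 : ∀ c d : ℕ, 1 ≤ c → c < d → d ≤ n + 1 → v (c, d) ≤ 1)
    (hnd : ∀ d : ℕ, i + 1 < d → d ≤ n + 1 → ¬ (v (i, d) = 1 ∧ v (i + 1, d) = 1))
    (L' : List (ℕ × Sym3))
    (hred : Relation.ReflTransGen PairDel (phase1 (seq0 n i v)) L')
    (hstop : ¬ ∃ L'', PairDel L' L'') :
    (∀ (l1 l2 : List (ℕ × Sym3)) (p : ℕ),
        L' = l1 ++ (p, Sym3.minus) :: l2 → initLen L' ≤ l1.length →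
        (∀ f ∈ l2, f.2 ≠ Sym3.minus) →
        j0R n v i = i + p + 1 ∧ v (i, i + p + 1) = 0 ∧ v (i + 1, i + p + 1) = 1 ∧
        FRein n i v (i, i + p + 1) = v (i, i + p + 1) + 1 ∧
        (0 < p → FRein n i v (i + 1, i + p + 1) = v (i + 1, i + p + 1) - 1)) ∧
    ((∀ (l1 l2 : List (ℕ × Sym3)) (p : ℕ),
        L' = l1 ++ (p, Sym3.minus) :: l2 → l1.length < initLen L') →
      j0R n v i = i + 1 ∧ FRein n i v (i, i + 1) = v (i, i + 1) + 1) := by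
  have hInv : Inv n v i L' := by
    clear hstop
    induction hred with
    | refl => exact inv_init hi1 hin h01
    | tail _ hpd ih => exact inv_pairdel hi1 hin h01 hnd hpd ih
  obtain ⟨hhead, helem, htail, hchain, hlast⟩ := hInv
  obtain ⟨z, t0, rfl⟩ : ∃ z t0, L' = z :: t0 := by
    cases L' with
    | nil => simp at hhead
    | cons z t0 => exact ⟨z, t0, rfl⟩
  have hz0 : z = (0, symAt v i 0) := by simpa using hhead
  subst hz0
  simp only [List.tail_cons] at htail
  have hLne : ((0, symAt v i 0) :: t0) ≠ [] := by simp
  -- characterization of j0R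
  have hj0char : ∀ J : ℕ, i + 1 ≤ J → J ≤ n + 1 →
      (∀ j', i + 1 ≤ j' → j' ≤ n + 1 → fRein n v i j' ≤ fRein n v i J) →
      (∀ j', i + 1 ≤ j' → j' < J → fRein n v i j' < fRein n v i J) →
      j0R n v i = J := by
    intro J hJ1 hJ2 hmax hstrict
    unfold j0R
    have hmem : J ∈ {j : ℕ | i + 1 ≤ j ∧ j ≤ n + 1 ∧
        ∀ j' : ℕ, i + 1 ≤ j' → j' ≤ n + 1 → fRein n v i j' ≤ fRein n v i j} :=
      ⟨hJ1, hJ2, hmax⟩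
    have h1 := Nat.sInf_le hmem
    obtain ⟨ha, hb, hc⟩ := Nat.sInf_mem (⟨J, hmem⟩ : Set.Nonempty _)
    rcases Nat.lt_or_ge (sInf {j : ℕ | i + 1 ≤ j ∧ j ≤ n + 1 ∧
        ∀ j' : ℕ, i + 1 ≤ j' → j' ≤ n + 1 → fRein n v i j' ≤ fRein n v i j}) J with h | h
    · exact absurd (hc J hJ1 hJ2) (not_le.mpr (hstrict _ ha h))
    · omega
  have hGtr : ∀ j', i + 1 ≤ j' → fRein n v i j' = GG n v i (j' - i - 1) := by
    intro j' h
    unfold GG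
    congr 1
    omega
  have hG0 : GG n v i 0 = Ph n v i 0 := by
    rw [GG_eq_Ph n v i hin 0 (by omega), bE_zero]
    ring
  have hG0f : fRein n v i (i + 1) = GG n v i 0 := rfl
  constructor
  -- CASE 1
  · intro l1 l2 p hL hlen hl2m
    have hinit2 : initLen ((0, symAt v i 0) :: t0) ≤ 2 := by
      unfold initLen; split <;> omega
    have hinit1 : 1 ≤ initLen ((0, symAt v i 0) :: t0) := by
      unfold initLen; split <;> omega
    obtain ⟨z', t, rfl⟩ : ∃ z' t, l1 = z' :: t := by
      cases l1 with
      | nil => simp at hL hlen; omega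
      | cons z' t => exact ⟨z', t, rfl⟩
    rw [List.cons_append] at hL
    have hz' : z' = (0, symAt v i 0) := by
      have := hL
      injection this with h1 h2
      exact h1.symm
    have ht0 : t0 = t ++ (p, Sym3.minus) :: l2 := by
      injection hL with h1 h2
    subst hz'
    -- symbols in t are all minus
    have ht_minus : ∀ e ∈ t, symAt v i e.1 = Sym3.minus ∧ e.1 ≤ n - i := by
      intro e he
      have heL : e ∈ (0, symAt v i 0) :: t0 := by
        rw [ht0]; simp [he]
      have hcor := helem e heL
      have hnz : e.2 ≠ Sym3.zero := by
        apply htail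
        rw [ht0]; simp [he]
      have hnp : e.2 ≠ Sym3.plus := by
        intro hp2
        obtain ⟨u, rest, hurest⟩ := List.append_of_mem he
        exact noplus hLne htail hstop rest u l2 e (p, Sym3.minus)
          (by rw [List.tail_cons, ht0, hurest]; simp) hp2 rfl
      cases he2 : e.2 with
      | zero => exact absurd he2 hnz
      | plus => exact absurd he2 hnp
      | minus => exact ⟨by rw [← hcor.1, he2], hcor.2⟩
    have hl2_plus : ∀ e ∈ l2, symAt v i e.1 = Sym3.plus ∧ e.1 ≤ n - i := by
      intro e he
      have heL : e ∈ (0, symAt v i 0) :: t0 := by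
        rw [ht0]; simp [he]
      have hcor := helem e heL
      have hnz : e.2 ≠ Sym3.zero := by
        apply htail
        rw [ht0]; simp [he]
      cases he2 : e.2 with
      | zero => exact absurd he2 hnz
      | minus => exact absurd he2 (hl2m e he)
      | plus => exact ⟨by rw [← hcor.1, he2], hcor.2⟩
    have hpcor := helem (p, Sym3.minus) (by rw [ht0]; simp)
    have hps : symAt v i p = Sym3.minus := hpcor.1.symm
    have hpN : p ≤ n - i := hpcor.2
    rw [ht0] at hchain hlast
    obtain ⟨h0p, hGp, hub, hsb⟩ :=
      lemB hi1 hin h01 hnd t (0, symAt v i 0) p l2 ht_minus hl2_plus hps hpN hchain hlast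
    simp only at h0p hGp hub hsb
    -- w0 + t.length + 1 ≥ 1
    have hw0len : (1 : ℤ) ≤ wE v i 0 + (t.length : ℤ) + 1 := by
      by_cases hs0 : symAt v i 0 = Sym3.plus
      · have hw0 := (sym_plus hi1 hin h01 hnd (by omega) hs0).2.2
        have htne : t ≠ [] := by
          intro hte
          subst hte
          have : initLen ((0, symAt v i 0) :: t0) = 2 := by
            unfold initLen
            rw [if_pos]
            rw [ht0, hs0]
            simp
          simp at hlen
          omega
        have : 1 ≤ t.length := by
          cases t with
          | nil => exact absurd rfl htne
          | cons _ _ => simp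
        have : (1 : ℤ) ≤ (t.length : ℤ) := by exact_mod_cast this
        rw [hw0]; linarith
      · have ha1 : v (i, i + 1) ≠ 1 := by
          intro h
          exact hs0 (by unfold symAt pairAt; simp [h])
        have hle := h01 i (i + 1) hi1 (by omega) (by omega)
        have ha0 : aE v i 0 = 0 := by
          unfold aE
          norm_num
          omega
        have hw0 : wE v i 0 = 0 := by
          unfold wE; rw [bE_zero, ha0]; ring
        have : (0 : ℤ) ≤ (t.length : ℤ) := Nat.cast_nonneg _
        rw [hw0]; linarith
    have hmax : ∀ j', i + 1 ≤ j' → j' ≤ n + 1 →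
        fRein n v i j' ≤ fRein n v i (i + p + 1) := by
      intro j' h1 h2
      rw [hGtr j' h1, hGtr (i + p + 1) (by omega),
        show i + p + 1 - i - 1 = p by omega]
      rcases Nat.eq_zero_or_pos (j' - i - 1) with hq | hq
      · rw [hq, hG0, hGp]
        linarith
      · rw [hGp]
        exact hub (j' - i - 1) (by omega) (by omega)
    have hstrict : ∀ j', i + 1 ≤ j' → j' < i + p + 1 →
        fRein n v i j' < fRein n v i (i + p + 1) := by
      intro j' h1 h2
      rw [hGtr j' h1, hGtr (i + p + 1) (by omega),
        show i + p + 1 - i - 1 = p by omega]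
      rcases Nat.eq_zero_or_pos (j' - i - 1) with hq | hq
      · rw [hq, hG0, hGp]
        linarith
      · rw [hGp]
        exact hsb (j' - i - 1) (by omega) (by omega)
    have hj0 : j0R n v i = i + p + 1 :=
      hj0char (i + p + 1) (by omega) (by omega) hmax hstrict
    obtain ⟨hvi0, _, _, hm⟩ := sym_minus hi1 hin h01 hpN hps
    obtain ⟨hvi1, _, _⟩ := hm (by omega)
    refine ⟨hj0, hvi0, hvi1, ?_, ?_⟩
    · unfold FRein
      rw [hj0]
      rw [if_pos rfl]
    · intro hp0
      unfold FRein
      rw [hj0]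
      rw [if_neg (by simp), if_pos ⟨rfl, by omega⟩]
  -- CASE 2
  · intro hnomin
    have hmax0 : ∀ q, q ≤ n - i → GG n v i q ≤ GG n v i 0 := by
      by_cases hex : ∃ e ∈ t0, e.2 = Sym3.minus
      · obtain ⟨u, e, u', ht0, he2, hu'⟩ := last_minus t0 hex
        have heq : e = (e.1, Sym3.minus) := by
          rw [← he2]
        have hdec : (0, symAt v i 0) :: t0 = ((0, symAt v i 0) :: u) ++ (e.1, Sym3.minus) :: u' := by
          rw [ht0, ← heq]
          simp
        have hlt := hnomin ((0, symAt v i 0) :: u) u' e.1 hdec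
        have hinit2 : initLen ((0, symAt v i 0) :: t0) ≤ 2 := by
          unfold initLen; split <;> omega
        have hu : u = [] := by
          cases u with
          | nil => rfl
          | cons _ _ => simp at hlt; omega
        subst hu
        have hinitval : initLen ((0, symAt v i 0) :: t0) = 2 := by
          simp at hlt; omega
        have hs0 : symAt v i 0 = Sym3.plus := by
          unfold initLen at hinitval
          by_cases hcond : (((0, symAt v i 0) :: t0).map Prod.snd).take 2
              = [Sym3.plus, Sym3.minus]
          · rw [ht0] at hcond
            simp [he2] at hcond
            exact hcond
          · rw [if_neg hcond] at hinitval
            omega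
        have hecor := helem e (by rw [ht0]; simp)
        have hes : symAt v i e.1 = Sym3.minus := by rw [← hecor.1, he2]
        have heN : e.1 ≤ n - i := hecor.2
        have hu'_plus : ∀ f ∈ u', symAt v i f.1 = Sym3.plus ∧ f.1 ≤ n - i := by
          intro f hf
          have hfL : f ∈ (0, symAt v i 0) :: t0 := by rw [ht0]; simp [hf]
          have hcor := helem f hfL
          have hnz : f.2 ≠ Sym3.zero := by
            apply htail
            rw [ht0]; simp [hf]
          cases hf2 : f.2 with
          | zero => exact absurd hf2 hnz
          | minus => exact absurd hf2 (hu' f hf)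
          | plus => exact ⟨by rw [← hcor.1, hf2], hcor.2⟩
        rw [ht0, List.nil_append, heq] at hchain hlast
        have hR0e : RR n v i (0, symAt v i 0) (e.1, Sym3.minus) :=
          (List.isChain_cons_cons.mp hchain).1
        have hchain' : List.Chain' (RR n v i) ((e.1, Sym3.minus) :: u') :=
          (List.isChain_cons_cons.mp hchain).2
        have hTL' : ∀ y, ((e.1, Sym3.minus) :: u').getLast? = some y → TL n v i y := by
          intro y hy
          exact hlast y (by rw [List.getLast?_cons_cons]; exact hy)
        have hw0 := (sym_plus hi1 hin h01 hnd (by omega) hs0).2.2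
        have hene : e.1 ≠ 0 := by
          have := hR0e.1; simp at this; omega
        obtain ⟨_, _, _, hm⟩ := sym_minus hi1 hin h01 heN hes
        obtain ⟨_, hbe, hwe⟩ := hm hene
        have hPhe : Ph n v i e.1 = Ph n v i 0 + wE v i 0 := by
          have := hR0e.2.1
          simpa using this
        have hafter := lemA hi1 hin h01 hnd u' (e.1, Sym3.minus)
          (by intro f hf; exact hu'_plus f hf) hchain' hTL'
        simp only at hafter
        intro q hq
        rcases Nat.eq_zero_or_pos q with hq0 | hq0
        · rw [hq0]
        · rcases Nat.lt_trichotomy q e.1 with hlt | heqq | hgt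
          · have := (hR0e.2.2 q (by omega) hlt).2
            simp only at this
            rw [hG0, hw0] at *
            linarith
          · rw [heqq, GG_eq_Ph n v i hin e.1 heN, hPhe, hbe, hG0, hw0]
            linarith
          · have := hafter q hgt hq
            rw [hwe, hPhe, hw0] at this
            rw [hG0]
            linarith
      · have ht0_plus : ∀ f ∈ t0, symAt v i f.1 = Sym3.plus ∧ f.1 ≤ n - i := by
          intro f hf
          have hcor := helem f (by simp [hf])
          have hnz : f.2 ≠ Sym3.zero := htail f hf
          cases hf2 : f.2 with
          | zero => exact absurd hf2 hnz
          | minus => exact absurd ⟨f, hf, hf2⟩ hex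
          | plus => exact ⟨by rw [← hcor.1, hf2], hcor.2⟩
        have hafter := lemA hi1 hin h01 hnd t0 (0, symAt v i 0) ht0_plus hchain hlast
        simp only at hafter
        have hw0le : wE v i 0 ≤ 0 := by
          have : (0 : ℤ) ≤ aE v i 0 := Nat.cast_nonneg _
          unfold wE
          rw [bE_zero]
          linarith
        intro q hq
        rcases Nat.eq_zero_or_pos q with hq0 | hq0
        · rw [hq0]
        · have := hafter q (by omega) hq
          rw [hG0]
          linarith
    have hmax : ∀ j', i + 1 ≤ j' → j' ≤ n + 1 →
        fRein n v i j' ≤ fRein n v i (i + 1) := by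
      intro j' h1 h2
      rw [hGtr j' h1, hG0f]
      exact hmax0 (j' - i - 1) (by omega)
    have hj0 : j0R n v i = i + 1 :=
      hj0char (i + 1) (by omega) (by omega) hmax (by intro j' h1 h2; omega)
    refine ⟨hj0, ?_⟩
    unfold FRein
    rw [hj0, if_pos rfl]


end Paper
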